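/- Small gain theorem for ergodic norms: Let s^1, …, s^m be sequences of matrices and λ ∈ (0,1). Suppose there are nonnegative constants γ_1, …, γ_m and ω_1, …, ω_m such that for all positive integers K and each i = 1, …, m, ‖s^{(i mod m)+1}‖^{λ,K} ≤ γ_i ‖s^i‖^{λ,K} + ω_i, and suppose γ_1 γ_2 ⋯ γ_m < 1. Then ‖s^1‖^λ ≤ (1/(1 − ∏_{i=1}^m γ_i)) · Σ_{i=1}^m ω_i ∏_{j=i+1}^m γ_j; in particular ‖s^1‖^λ is finite. -/

import Mathlib

open scoped BigOperators

/-- Frobenius norm of a real matrix. -/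
noncomputable def frob {n p : ℕ} (A : Matrix (Fin n) (Fin p) ℝ) : ℝ :=
  Real.sqrt (∑ i, ∑ j, (A i j) ^ 2)

/-- Truncated weighted norm `‖s‖^{λ,K} = max_{k=0,…,K} λ^{-k} ‖s_k‖_F`. -/
noncomputable def tnorm {n p : ℕ} (s : ℕ → Matrix (Fin n) (Fin p) ℝ) (l : ℝ) (K : ℕ) : ℝ :=
  (Finset.range (K + 1)).sup' Finset.nonempty_range_add_one (fun k => frob (s k) / l ^ k)

/-!
Fix `K` and write `x i = ‖s^i‖^{λ,K}`. Unrolling `x (i + 1) ≤ γ i * x i + ω i` once around the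
cycle gives `x 0 ≤ (∏ γ) * x 0 + ∑ i, ω i * ∏_{j > i} γ j`, and `∏ γ < 1` turns this into a bound
on `x 0` that does not depend on `K`. Every term `λ^{-k} ‖s^1_k‖_F` of the ergodic norm is
dominated by `x 0` for `K = k`.
-/

open Finset

theorem le_prod_mul_add_sum_of_le_mul_add {R : Type*} [CommSemiring R] [PartialOrder R]
    [IsOrderedRing R] {x γ ω : ℕ → R} {n : ℕ} (hγ : ∀ t < n, 0 ≤ γ t)
    (h : ∀ t < n, x (t + 1) ≤ γ t * x t + ω t) :
    x n ≤ (∏ t ∈ range n, γ t) * x 0 + ∑ i ∈ range n, ω i * ∏ j ∈ Ico (i + 1) n, γ j := by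
  induction n with
  | zero => simp
  | succ n ih =>
    have ih := ih (fun t ht => hγ t (Nat.lt_succ_of_lt ht))
      (fun t ht => h t (Nat.lt_succ_of_lt ht))
    have hsum : ∑ i ∈ range (n + 1), ω i * ∏ j ∈ Ico (i + 1) (n + 1), γ j =
        (∑ i ∈ range n, ω i * ∏ j ∈ Ico (i + 1) n, γ j) * γ n + ω n := by
      rw [sum_range_succ, Ico_self, prod_empty, mul_one, sum_mul]
      congr 1
      refine sum_congr rfl fun i hi => ?_
      rw [prod_Ico_succ_top (mem_range.mp hi), mul_assoc]
    calc x (n + 1) ≤ γ n * x n + ω n := h n n.lt_succ_self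
      _ ≤ γ n * ((∏ t ∈ range n, γ t) * x 0 +
            ∑ i ∈ range n, ω i * ∏ j ∈ Ico (i + 1) n, γ j) + ω n := by
        gcongr
        exact hγ n n.lt_succ_self
      _ = _ := by rw [prod_range_succ, hsum]; ring

theorem Fin.prod_filter_lt_eq_prod_Ico {M : Type*} [CommMonoid M] {m : ℕ} (f : ℕ → M)
    (i : Fin m) :
    ∏ j ∈ univ.filter (fun j : Fin m => i < j), f j = ∏ j ∈ Ico (i + 1 : ℕ) m, f j := by
  rw [filter_lt_eq_Ioi, Ico_add_one_left_eq_Ioo, ← Fin.map_valEmbedding_Ioi, prod_map]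
  rfl

open Fin.NatCast in
theorem Fin.le_prod_mul_add_sum_of_cyclic_le_mul_add {R : Type*} [CommSemiring R]
    [PartialOrder R] [IsOrderedRing R] {m : ℕ} [NeZero m] {x γ ω : Fin m → R}
    (hγ : ∀ i, 0 ≤ γ i) (h : ∀ i, x (i + 1) ≤ γ i * x i + ω i) :
    x 0 ≤ (∏ i, γ i) * x 0 + ∑ i, ω i * ∏ j ∈ univ.filter (fun j => i < j), γ j := by
  obtain ⟨g, rfl⟩ : ∃ g : ℕ → R, γ = fun i : Fin m => g i := ⟨fun t => γ t, by simp⟩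
  obtain ⟨w, rfl⟩ : ∃ w : ℕ → R, ω = fun i : Fin m => w i := ⟨fun t => ω t, by simp⟩
  have hunroll := le_prod_mul_add_sum_of_le_mul_add (x := fun t : ℕ => x t) (γ := g)
    (ω := w) (n := m) (fun t ht => by simpa [Fin.val_cast_of_lt ht] using hγ t)
    (fun t ht => by simpa [Fin.val_cast_of_lt ht] using h t)
  simpa only [Fin.natCast_self, Nat.cast_zero, Fin.prod_filter_lt_eq_prod_Ico,
    Fin.prod_univ_eq_prod_range,
    Fin.sum_univ_eq_sum_range (fun i => w i * ∏ j ∈ Ico (i + 1) m, g j)] using hunroll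

theorem frob_div_pow_le_tnorm {n p : ℕ} (s : ℕ → Matrix (Fin n) (Fin p) ℝ) (l : ℝ) {k K : ℕ}
    (hk : k ≤ K) : frob (s k) / l ^ k ≤ tnorm s l K :=
  le_sup' (fun j => frob (s j) / l ^ j) (mem_range.mpr (Nat.lt_succ_of_le hk))

/-- The `m` sequences are indexed by `Fin m`: `s i` is the paper's `s^{i+1}`, and `i + 1` is the
cyclic successor `(i mod m) + 1`. -/
theorem small_gain_theorem_general {n p m : ℕ} [NeZero m]
    (s : Fin m → ℕ → Matrix (Fin n) (Fin p) ℝ) (l : ℝ)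
    (γ ω : Fin m → ℝ) (hγ : ∀ i, 0 ≤ γ i)
    (hrec : ∀ (K : ℕ) (i : Fin m),
      tnorm (s (i + 1)) l K ≤ γ i * tnorm (s i) l K + ω i)
    (hprod : ∏ i, γ i < 1) :
    ∀ k : ℕ, frob (s 0 k) / l ^ k ≤
      (1 / (1 - ∏ i, γ i)) *
        ∑ i, ω i * ∏ j ∈ Finset.univ.filter (fun j => i < j), γ j := by
  intro k
  have hcycle := Fin.le_prod_mul_add_sum_of_cyclic_le_mul_add
    (x := fun i => tnorm (s i) l k) hγ (hrec k)
  rw [one_div_mul_eq_div, le_div_iff₀ (sub_pos.mpr hprod)]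
  calc frob (s 0 k) / l ^ k * (1 - ∏ i, γ i) ≤ tnorm (s 0) l k * (1 - ∏ i, γ i) :=
        mul_le_mul_of_nonneg_right (frob_div_pow_le_tnorm _ l le_rfl) (sub_pos.mpr hprod).le
    _ ≤ _ := by linarith

/-- the small gain theorem for ergodic norms.  The `m` sequences are
indexed by `Fin m` (so `s i` is the paper's `s^{i+1}`, and `i + 1` is the cyclic
successor `(i mod m) + 1`). -/
theorem small_gain_theorem {n p m : ℕ} [NeZero m]
    (s : Fin m → ℕ → Matrix (Fin n) (Fin p) ℝ) (l : ℝ) (hl0 : 0 < l) (hl1 : l < 1)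
    (γ ω : Fin m → ℝ) (hγ : ∀ i, 0 ≤ γ i) (hω : ∀ i, 0 ≤ ω i)
    (hrec : ∀ (K : ℕ) (i : Fin m),
      tnorm (s (i + 1)) l K ≤ γ i * tnorm (s i) l K + ω i)
    (hprod : ∏ i, γ i < 1) :
    ∀ k : ℕ, frob (s 0 k) / l ^ k ≤
      (1 / (1 - ∏ i, γ i)) *
        ∑ i, ω i * ∏ j ∈ Finset.univ.filter (fun j => i < j), γ j :=
  small_gain_theorem_general s l γ ω hγ hrec hprod
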